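/- Let W be a real n×n matrix, α > 0, L > 0, and define A = L W (α I + Wᵀ W)^(−1/2) and D₁ = L² I − Aᵀ A = L² α (α I + Wᵀ W)^(−1). Then for any real matrix W₁ of compatible size and α₁ > 0, the matrix C₁ = √2 · W₁ (α₁ I + W₁ᵀ W₁)^(−1/2) D₁^(1/2) satisfies D₂ := 2I − C₁ D₁^(−1) C₁ᵀ = 2 α₁ (α₁ I + W₁ W₁ᵀ)^(−1) ≻ 0, and therefore the two-layer residual LMI condition C₁ D₁^(−1) C₁ᵀ ⪯ 2I holds strictly. -/

import Mathlib

open Matrix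

section OldSqrt

open scoped ComplexOrder

/-- The square root of a positive semidefinite matrix, as defined in the older Mathlib. -/
noncomputable def Matrix.PosSemidef.sqrt {n 𝕜 : Type*} [Fintype n] [RCLike 𝕜] [DecidableEq n]
    {A : Matrix n n 𝕜} (hA : A.PosSemidef) : Matrix n n 𝕜 :=
  hA.1.eigenvectorUnitary.1 * diagonal ((↑) ∘ Real.sqrt ∘ hA.1.eigenvalues) *
  (star hA.1.eigenvectorUnitary : Matrix n n 𝕜)

end OldSqrt

lemma Matrix.PosSemidef.sqrt_mul_self {m : ℕ} {M : Matrix (Fin m) (Fin m) ℝ}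
    (hM : M.PosSemidef) : hM.sqrt * hM.sqrt = M := by
  have hU : (star hM.1.eigenvectorUnitary : Matrix (Fin m) (Fin m) ℝ) *
      hM.1.eigenvectorUnitary.1 = 1 := Unitary.coe_star_mul_self _
  have hD : diagonal ((↑) ∘ Real.sqrt ∘ hM.1.eigenvalues) *
      diagonal ((↑) ∘ Real.sqrt ∘ hM.1.eigenvalues) =
      diagonal (RCLike.ofReal ∘ hM.1.eigenvalues : Fin m → ℝ) := by
    rw [diagonal_mul_diagonal]
    congr 1
    funext i
    simp [Real.mul_self_sqrt (hM.eigenvalues_nonneg i)]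
  conv_rhs => rw [hM.1.spectral_theorem, Unitary.conjStarAlgAut_apply]
  unfold Matrix.PosSemidef.sqrt
  calc _ = hM.1.eigenvectorUnitary.1 * diagonal ((↑) ∘ Real.sqrt ∘ hM.1.eigenvalues) *
        ((star hM.1.eigenvectorUnitary : Matrix (Fin m) (Fin m) ℝ) *
      hM.1.eigenvectorUnitary.1) * diagonal ((↑) ∘ Real.sqrt ∘ hM.1.eigenvalues) *
        (star hM.1.eigenvectorUnitary : Matrix (Fin m) (Fin m) ℝ) := by
        simp only [Matrix.mul_assoc]; rfl
    _ = _ := by rw [hU, Matrix.mul_one, Matrix.mul_assoc _ (diagonal _) (diagonal _), hD]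

lemma Matrix.PosSemidef.posSemidef_sqrt {m : ℕ} {M : Matrix (Fin m) (Fin m) ℝ}
    (hM : M.PosSemidef) : hM.sqrt.PosSemidef := by
  unfold Matrix.PosSemidef.sqrt
  have h : (star hM.1.eigenvectorUnitary : Matrix (Fin m) (Fin m) ℝ) =
      (hM.1.eigenvectorUnitary.1)ᴴ := star_eq_conjTranspose _
  rw [h]
  refine (PosSemidef.diagonal ?_).mul_mul_conjTranspose_same _
  intro i
  simp [Real.sqrt_nonneg]

lemma posDef_smul' {p : ℕ} {M : Matrix (Fin p) (Fin p) ℝ} (h : M.PosDef) {c : ℝ} (hc : 0 < c) :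
    (c • M).PosDef := by
  refine ⟨?_, fun x hx => ?_⟩
  · show _ = _
    rw [conjTranspose_smul, star_trivial, h.1]
  · simpa [Finsupp.mul_sum, mul_assoc, mul_left_comm] using smul_pos hc (h.2 hx)

lemma posDef_R {m n : ℕ} (W : Matrix (Fin m) (Fin n) ℝ) {a : ℝ} (ha : 0 < a) :
    (a • (1 : Matrix (Fin m) (Fin m) ℝ) + W * Wᵀ).PosDef := by
  have h1 : (a • (1 : Matrix (Fin m) (Fin m) ℝ)).PosDef := posDef_smul' Matrix.PosDef.one ha
  have h2 : (W * Wᵀ).PosSemidef := by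
    have := Matrix.posSemidef_self_mul_conjTranspose W
    simpa using this
  exact h1.add_posSemidef h2

/-- key identity: 1 - W Q⁻¹ Wᵀ = a • (a•1 + W Wᵀ)⁻¹ -/
lemma key_id {m n : ℕ} (W : Matrix (Fin m) (Fin n) ℝ) (a : ℝ) (ha : 0 < a)
    (hQ : (a • (1 : Matrix (Fin n) (Fin n) ℝ) + Wᵀ * W).PosDef) :
    (1 : Matrix (Fin m) (Fin m) ℝ) - W * (a • (1 : Matrix (Fin n) (Fin n) ℝ) + Wᵀ * W)⁻¹ * Wᵀ
      = a • (a • (1 : Matrix (Fin m) (Fin m) ℝ) + W * Wᵀ)⁻¹ := by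
  set Q := a • (1 : Matrix (Fin n) (Fin n) ℝ) + Wᵀ * W with hQdef
  set R := a • (1 : Matrix (Fin m) (Fin m) ℝ) + W * Wᵀ with hRdef
  have hR : R.PosDef := posDef_R W ha
  have hQu : IsUnit Q.det := (Matrix.isUnit_iff_isUnit_det Q).mp hQ.isUnit
  have hRu : IsUnit R.det := (Matrix.isUnit_iff_isUnit_det R).mp hR.isUnit
  have hWQ : W * Q = R * W := by
    rw [hQdef, hRdef, Matrix.mul_add, Matrix.add_mul, Matrix.mul_smul, Matrix.smul_mul,
      Matrix.mul_one, Matrix.one_mul, Matrix.mul_assoc]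
  have key : R * ((1 : Matrix (Fin m) (Fin m) ℝ) - W * Q⁻¹ * Wᵀ) = a • 1 := by
    have h1 : R * (W * Q⁻¹ * Wᵀ) = W * Wᵀ := by
      calc R * (W * Q⁻¹ * Wᵀ) = (R * W) * Q⁻¹ * Wᵀ := by
            rw [← Matrix.mul_assoc, ← Matrix.mul_assoc]
        _ = (W * Q) * Q⁻¹ * Wᵀ := by rw [hWQ]
        _ = W * Wᵀ := by rw [Matrix.mul_assoc W Q Q⁻¹, Matrix.mul_nonsing_inv _ hQu,
            Matrix.mul_one]
    rw [Matrix.mul_sub, h1, Matrix.mul_one, hRdef]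
    abel
  calc (1 : Matrix (Fin m) (Fin m) ℝ) - W * Q⁻¹ * Wᵀ
      = R⁻¹ * (R * ((1 : Matrix (Fin m) (Fin m) ℝ) - W * Q⁻¹ * Wᵀ)) := by
        rw [← Matrix.mul_assoc, Matrix.nonsing_inv_mul _ hRu, Matrix.one_mul]
    _ = R⁻¹ * (a • 1) := by rw [key]
    _ = a • R⁻¹ := by rw [Matrix.mul_smul, Matrix.mul_one]

theorem stmt17 {n p : ℕ} (W : Matrix (Fin n) (Fin n) ℝ) (α L : ℝ) (hα : 0 < α) (hL : 0 < L)
    (hP : (α • (1 : Matrix (Fin n) (Fin n) ℝ) + Wᵀ * W).PosDef)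
    (A : Matrix (Fin n) (Fin n) ℝ) (hA : A = L • (W * (hP.posSemidef.sqrt)⁻¹))
    (D₁ : Matrix (Fin n) (Fin n) ℝ)
    (hD₁def : D₁ = (L ^ 2) • (1 : Matrix (Fin n) (Fin n) ℝ) - Aᵀ * A)
    (hD₁ : D₁.PosSemidef)
    (W₁ : Matrix (Fin p) (Fin n) ℝ) (α₁ : ℝ) (hα₁ : 0 < α₁)
    (hP₁ : (α₁ • (1 : Matrix (Fin n) (Fin n) ℝ) + W₁ᵀ * W₁).PosDef)
    (C₁ : Matrix (Fin p) (Fin n) ℝ)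
    (hC₁ : C₁ = Real.sqrt 2 • (W₁ * (hP₁.posSemidef.sqrt)⁻¹ * hD₁.sqrt)) :
    D₁ = (L ^ 2 * α) • (α • (1 : Matrix (Fin n) (Fin n) ℝ) + Wᵀ * W)⁻¹ ∧
      (2 : ℝ) • (1 : Matrix (Fin p) (Fin p) ℝ) - C₁ * D₁⁻¹ * C₁ᵀ
          = (2 * α₁) • (α₁ • (1 : Matrix (Fin p) (Fin p) ℝ) + W₁ * W₁ᵀ)⁻¹ ∧
      ((2 : ℝ) • (1 : Matrix (Fin p) (Fin p) ℝ) - C₁ * D₁⁻¹ * C₁ᵀ).PosDef := by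
  set P := α • (1 : Matrix (Fin n) (Fin n) ℝ) + Wᵀ * W with hPdef
  set S := hP.posSemidef.sqrt with hSdef
  have hSS : S * S = P := hP.posSemidef.sqrt_mul_self
  have hSsym : Sᵀ = S := by
    have := hP.posSemidef.posSemidef_sqrt.isHermitian
    simpa using this.eq
  have hPu : IsUnit P.det := (Matrix.isUnit_iff_isUnit_det P).mp hP.isUnit
  have hSu : IsUnit S.det := by
    have : S.det * S.det = P.det := by rw [← Matrix.det_mul, hSS]
    rcases hPu with ⟨u, hu⟩
    exact IsUnit.of_mul_eq_one (S.det * (u⁻¹ : ℝˣ)) (by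
      rw [← mul_assoc, this, ← hu]; simp)
  -- Part 1
  have part1 : D₁ = (L ^ 2 * α) • P⁻¹ := by
    have hinv : S⁻¹ * S⁻¹ = P⁻¹ := by rw [← Matrix.mul_inv_rev, hSS]
    have hAtA : Aᵀ * A = (L ^ 2) • (S⁻¹ * (Wᵀ * W) * S⁻¹) := by
      rw [hA]
      rw [Matrix.transpose_smul, Matrix.smul_mul, Matrix.mul_smul, smul_smul, ← sq]
      congr 1
      rw [Matrix.transpose_mul, Matrix.transpose_nonsing_inv, hSsym]
      noncomm_ring
    have hWtW : Wᵀ * W = P - α • 1 := by rw [hPdef]; abel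
    have h1 : S⁻¹ * P * S⁻¹ = 1 := by
      conv_lhs => rw [← hSS]
      simp only [Matrix.mul_assoc]
      rw [Matrix.mul_nonsing_inv _ hSu, Matrix.mul_one, Matrix.nonsing_inv_mul _ hSu]
    have hmid : S⁻¹ * (Wᵀ * W) * S⁻¹ = 1 - α • P⁻¹ := by
      rw [hWtW, Matrix.mul_sub, Matrix.sub_mul, Matrix.mul_smul, Matrix.smul_mul,
        Matrix.mul_one, hinv, h1]
    rw [hD₁def, hAtA, hmid, smul_sub, smul_smul]
    simp [smul_smul]
  refine ⟨part1, ?_⟩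
  -- D₁ is PosDef
  have hD₁pd : D₁.PosDef := by
    rw [part1]
    exact posDef_smul' hP.inv (by positivity)
  set T := hD₁.sqrt with hTdef
  have hTT : T * T = D₁ := hD₁.sqrt_mul_self
  have hTsym : Tᵀ = T := by
    have := hD₁.posSemidef_sqrt.isHermitian
    simpa using this.eq
  have hD₁u : IsUnit D₁.det := (Matrix.isUnit_iff_isUnit_det D₁).mp hD₁pd.isUnit
  have hTu : IsUnit T.det := by
    have : T.det * T.det = D₁.det := by rw [← Matrix.det_mul, hTT]
    rcases hD₁u with ⟨u, hu⟩
    exact IsUnit.of_mul_eq_one (T.det * (u⁻¹ : ℝˣ)) (by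
      rw [← mul_assoc, this, ← hu]; simp)
  set Q₁ := α₁ • (1 : Matrix (Fin n) (Fin n) ℝ) + W₁ᵀ * W₁ with hQ₁def
  set S₁ := hP₁.posSemidef.sqrt with hS₁def
  have hS₁S₁ : S₁ * S₁ = Q₁ := hP₁.posSemidef.sqrt_mul_self
  have hS₁sym : S₁ᵀ = S₁ := by
    have := hP₁.posSemidef.posSemidef_sqrt.isHermitian
    simpa using this.eq
  -- compute C₁ * D₁⁻¹ * C₁ᵀ
  have hTDT : T * D₁⁻¹ * T = 1 := by
    rw [← hTT, Matrix.mul_inv_rev]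
    simp only [Matrix.mul_assoc]
    rw [Matrix.nonsing_inv_mul _ hTu, Matrix.mul_one, Matrix.mul_nonsing_inv _ hTu]
  have hCDC : C₁ * D₁⁻¹ * C₁ᵀ = (2 : ℝ) • (W₁ * Q₁⁻¹ * W₁ᵀ) := by
    rw [hC₁]
    rw [Matrix.transpose_smul, Matrix.smul_mul, Matrix.mul_smul, Matrix.smul_mul, smul_smul,
      Real.mul_self_sqrt (by norm_num)]
    congr 1
    rw [Matrix.transpose_mul, Matrix.transpose_mul, hTsym, Matrix.transpose_nonsing_inv, hS₁sym]
    calc W₁ * S₁⁻¹ * T * D₁⁻¹ * (T * (S₁⁻¹ * W₁ᵀ))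
        = W₁ * S₁⁻¹ * (T * D₁⁻¹ * T) * (S₁⁻¹ * W₁ᵀ) := by
          simp only [Matrix.mul_assoc]
      _ = W₁ * S₁⁻¹ * (S₁⁻¹ * W₁ᵀ) := by rw [hTDT, Matrix.mul_one]
      _ = W₁ * (S₁⁻¹ * S₁⁻¹) * W₁ᵀ := by simp only [Matrix.mul_assoc]
      _ = W₁ * Q₁⁻¹ * W₁ᵀ := by rw [← Matrix.mul_inv_rev, hS₁S₁]
  have hkey := key_id W₁ α₁ hα₁ hP₁
  have part2 : (2 : ℝ) • (1 : Matrix (Fin p) (Fin p) ℝ) - C₁ * D₁⁻¹ * C₁ᵀ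
      = (2 * α₁) • (α₁ • (1 : Matrix (Fin p) (Fin p) ℝ) + W₁ * W₁ᵀ)⁻¹ := by
    rw [hCDC, ← smul_sub, hkey, smul_smul]
  refine ⟨part2, ?_⟩
  rw [part2]
  exact posDef_smul' (posDef_R W₁ hα₁).inv (by positivity)
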